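/- arXiv:1201.4624 — 5 statements merged into one kernel-verified Lean document; each statement's English description precedes it below -/
import Mathlib

section
/- If real numbers x, y, z satisfy 2x + 2y ≤ 1, 3x + 2y + 6z ≤ 2, 2y + 3z ≤ 1, and x, y, z ≥ 0, then x + y + z ≤ 19/30, with equality attained at x = 1/5, y = 3/10, z = 2/15. -/
theorem stmt_2 :
    (∀ x y z : ℝ, 2 * x + 2 * y ≤ 1 → 3 * x + 2 * y + 6 * z ≤ 2 → 2 * y + 3 * z ≤ 1 →
      0 ≤ x → 0 ≤ y → 0 ≤ z → x + y + z ≤ 19 / 30) ∧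
    (2 * (1 / 5 : ℝ) + 2 * (3 / 10) ≤ 1 ∧ 3 * (1 / 5 : ℝ) + 2 * (3 / 10) + 6 * (2 / 15) ≤ 2 ∧
      2 * (3 / 10 : ℝ) + 3 * (2 / 15) ≤ 1 ∧
      (0 : ℝ) ≤ 1 / 5 ∧ (0 : ℝ) ≤ 3 / 10 ∧ (0 : ℝ) ≤ 2 / 15 ∧
      (1 / 5 : ℝ) + 3 / 10 + 2 / 15 = 19 / 30) := by
  refine ⟨fun x y z h₁ h₂ h₃ _ _ _ => ?_, by norm_num⟩
  -- LP duality: the dual solution (3/10, 2/15, 1/15) weights the constraints so that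
  -- their left-hand sides sum to exactly x + y + z.
  calc x + y + z
      = 3 / 10 * (2 * x + 2 * y) + 2 / 15 * (3 * x + 2 * y + 6 * z) + 1 / 15 * (2 * y + 3 * z) := by
        ring
    _ ≤ 3 / 10 * 1 + 2 / 15 * 2 + 1 / 15 * 1 := by gcongr
    _ = 19 / 30 := by norm_num
end

section
/- Let G be a finite 6-regular graph with vertex set V, and let S ⊆ V be a set such that every vertex in S has at most 3 neighbors in S. Then |S| ≤ (2/3)|V|. -/
/-!
Give each vertex of `S` weight `d - k` and add the number of its neighbours in `S`: every vertex
then carries total weight at most `d`. Summing over all vertices, the neighbour counts add up to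
`d * #S` by double counting edges into `S`, so `(2d - k) * #S ≤ d * |V|`; for `d = 6`, `k = 3`
this is `#S ≤ 2/3 * |V|`.
-/

open scoped Classical

open Finset

namespace SimpleGraph

variable {V : Type*} [Fintype V] {G : SimpleGraph V}

theorem card_filter_adj_le_degree (S : Finset V) (v : V) :
    #{w ∈ S | G.Adj v w} ≤ G.degree v := by
  rw [← card_neighborFinset_eq_degree, neighborFinset_eq_filter]
  exact card_le_card (filter_subset_filter _ (subset_univ S))

theorem sum_card_filter_adj_eq_sum_degree (S : Finset V) :
    ∑ v, #{w ∈ S | G.Adj v w} = ∑ w ∈ S, G.degree w := by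
  refine (sum_card_bipartiteAbove_eq_sum_card_bipartiteBelow (s := univ) (t := S) G.Adj).trans ?_
  refine sum_congr rfl fun w _ => ?_
  simp only [bipartiteBelow, ← card_neighborFinset_eq_degree, neighborFinset_eq_filter, adj_comm]

namespace IsRegularOfDegree

theorem ite_add_card_filter_adj_le {d k : ℕ} (hreg : G.IsRegularOfDegree d) {S : Finset V}
    (hS : ∀ v ∈ S, #{w ∈ S | G.Adj v w} ≤ k) (v : V) :
    (if v ∈ S then d - k else 0) + #{w ∈ S | G.Adj v w} ≤ d := by
  have hdeg := hreg v ▸ card_filter_adj_le_degree (G := G) S v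
  split_ifs with hv
  · have := hS v hv
    omega
  · omega

theorem two_mul_sub_mul_card_le {d k : ℕ} (hreg : G.IsRegularOfDegree d) {S : Finset V}
    (hS : ∀ v ∈ S, #{w ∈ S | G.Adj v w} ≤ k) :
    (2 * d - k) * #S ≤ d * Fintype.card V := by
  have hsum := sum_le_sum fun v (_ : v ∈ univ) => hreg.ite_add_card_filter_adj_le hS v
  rw [sum_add_distrib, sum_ite_mem, univ_inter, sum_card_filter_adj_eq_sum_degree,
    sum_congr rfl fun w _ => hreg w] at hsum
  simp only [sum_const, smul_eq_mul, card_univ] at hsum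
  calc (2 * d - k) * #S ≤ (d - k + d) * #S := Nat.mul_le_mul_right _ (by omega)
    _ ≤ d * Fintype.card V := by linarith [add_mul (d - k) d #S]

end IsRegularOfDegree

end SimpleGraph

theorem stmt_3 {V : Type*} [Fintype V] (G : SimpleGraph V)
    (hreg : G.IsRegularOfDegree 6) (S : Finset V)
    (hS : ∀ v ∈ S, (S.filter (fun w => G.Adj v w)).card ≤ 3) :
    (S.card : ℝ) ≤ 2 / 3 * Fintype.card V := by
  have key : (2 * 6 - 3) * S.card ≤ 6 * Fintype.card V := hreg.two_mul_sub_mul_card_le hS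
  have : (9 : ℝ) * S.card ≤ 6 * Fintype.card V := by exact_mod_cast key
  linarith
end

section
/- Let G be a finite 3-regular graph with vertex set V, and let S ⊆ V be a set such that every vertex in S has at most 1 neighbor in S. Then |S| ≤ (3/5)|V|. -/
/-!
Give each vertex `v` the load `(d - k)·[v ∈ S] + |N(v) ∩ S|`. In a `d`-regular graph where every
vertex of `S` has at most `k` neighbours in `S`, each load is at most `d`, while double counting
the edges between `V` and `S` shows that the loads add up to `(d + (d - k))·|S|`. With `d = 3` and
`k = 1` this is `5|S| ≤ 3|V|`.
-/

open scoped Classical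

open Finset

namespace SimpleGraph

variable {V : Type*} [Fintype V] {G : SimpleGraph V} {d : ℕ}

theorem IsRegularOfDegree.card_filter_adj_le (hG : G.IsRegularOfDegree d) (S : Finset V)
    (v : V) : #(S.filter (G.Adj v ·)) ≤ d := by
  calc #(S.filter (G.Adj v ·)) ≤ #(univ.filter (G.Adj v ·)) :=
        card_le_card (filter_subset_filter _ (subset_univ S))
    _ = d := by rw [← neighborFinset_eq_filter, card_neighborFinset_eq_degree, hG v]

theorem IsRegularOfDegree.sum_card_filter_adj (hG : G.IsRegularOfDegree d) (S : Finset V) :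
    ∑ v, #(S.filter (G.Adj v ·)) = d * #S := by
  calc ∑ v, #(S.filter (G.Adj v ·))
      = ∑ w ∈ S, #(univ.filter (G.Adj · w)) :=
        sum_card_bipartiteAbove_eq_sum_card_bipartiteBelow G.Adj
    _ = ∑ _w ∈ S, d := by
        refine sum_congr rfl fun w _ => ?_
        simp_rw [G.adj_comm _ w]
        rw [← neighborFinset_eq_filter, card_neighborFinset_eq_degree, hG w]
    _ = d * #S := by rw [sum_const, smul_eq_mul, mul_comm]

theorem IsRegularOfDegree.mul_card_le_of_card_filter_adj_le (hG : G.IsRegularOfDegree d)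
    {k : ℕ} (S : Finset V) (hS : ∀ v ∈ S, #(S.filter (G.Adj v ·)) ≤ k) :
    (d + (d - k)) * #S ≤ d * Fintype.card V := by
  have load_le : ∀ v, (if v ∈ S then d - k else 0) + #(S.filter (G.Adj v ·)) ≤ d := by
    intro v
    split_ifs with hv
    · have := hS v hv
      have := hG.card_filter_adj_le S v
      omega
    · simpa using hG.card_filter_adj_le S v
  calc (d + (d - k)) * #S
      = ∑ v, ((if v ∈ S then d - k else 0) + #(S.filter (G.Adj v ·))) := by
        rw [sum_add_distrib, hG.sum_card_filter_adj, sum_ite_mem, univ_inter, sum_const,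
          smul_eq_mul]
        ring
    _ ≤ ∑ _v : V, d := sum_le_sum fun v _ => load_le v
    _ = d * Fintype.card V := by rw [sum_const, card_univ, smul_eq_mul, mul_comm]

end SimpleGraph

theorem stmt_4 {V : Type*} [Fintype V] (G : SimpleGraph V)
    (hreg : G.IsRegularOfDegree 3) (S : Finset V)
    (hS : ∀ v ∈ S, (S.filter (fun w => G.Adj v w)).card ≤ 1) :
    (S.card : ℝ) ≤ 3 / 5 * Fintype.card V := by
  have h : 5 * S.card ≤ 3 * Fintype.card V := hreg.mul_card_le_of_card_filter_adj_le S hS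
  have h' : (5 : ℝ) * S.card ≤ 3 * Fintype.card V := by exact_mod_cast h
  linarith
end

section
/- Let G be a finite graph whose vertex set is partitioned into a set Q of 'square' vertices of degree 4 and a set T of 'triangle' vertices of degree 3, with |T| = 2|Q|, such that every edge incident to a square vertex joins it to exactly 2 square vertices and 2 triangle vertices (each square vertex has 2 square neighbors and 2 triangle neighbors), and every triangle vertex has exactly 1 square neighbor and 2 triangle neighbors. If S is a set of vertices in which every square vertex of S has at most 2 neighbors in S and every triangle vertex of S has at most 1 neighbor in S, then |S| ≤ (13/21)·(|Q| + |T|). -/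
/-!
Give every vertex `v` the weight `2·[v ∈ S] + |N(v) ∩ S|`. The degree conditions on `S` bound it
by `4` on square and by `3` on triangle vertices, and double counting the edges between a class
and `S` turns the sums of these bounds over `Q` and over `T` into `4a + b ≤ 4|Q|` and
`2a + 4b ≤ 3|T|`, where `a = |S ∩ Q|` and `b = |S ∩ T|`. With `|T| = 2|Q|`, the combination
`1/7 · (first) + 3/14 · (second)` gives `a + b ≤ 13/7 · |Q| = 13/21 · (|Q| + |T|)`.
-/

section

open Finset

variable {V : Type*}

theorem Finset.inter_union_inter_eq_self_of_union_eq_univ [DecidableEq V] [Fintype V]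
    {Q T : Finset V} (hpart : Q ∪ T = univ) (S : Finset V) : S ∩ Q ∪ S ∩ T = S := by
  rw [← inter_union_distrib_left, hpart, inter_univ]

theorem Finset.card_eq_card_inter_add_card_inter [DecidableEq V] [Fintype V] {Q T : Finset V}
    (hpart : Q ∪ T = univ) (hdisj : Disjoint Q T) (S : Finset V) :
    #S = #(S ∩ Q) + #(S ∩ T) := by
  conv_lhs => rw [← inter_union_inter_eq_self_of_union_eq_univ hpart S]
  exact card_union_of_disjoint (hdisj.mono inter_subset_right inter_subset_right)

namespace SimpleGraph

variable (G : SimpleGraph V) [DecidableRel G.Adj]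

theorem sum_card_filter_adj_comm (A S : Finset V) :
    ∑ v ∈ A, #(S.filter (G.Adj v)) = ∑ u ∈ S, #(A.filter (G.Adj u)) := by
  have hbelow (u : V) : A.filter (G.Adj u) = A.bipartiteBelow G.Adj u :=
    filter_congr fun _ _ => G.adj_comm _ _
  simp_rw [hbelow]
  exact sum_card_bipartiteAbove_eq_sum_card_bipartiteBelow G.Adj

variable [DecidableEq V]

theorem card_filter_adj_le_add [Fintype V] {Q T : Finset V} (hpart : Q ∪ T = univ)
    (S : Finset V) (v : V) :
    #(S.filter (G.Adj v)) ≤ #(Q.filter (G.Adj v)) + #(T.filter (G.Adj v)) :=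
  calc #(S.filter (G.Adj v)) ≤ #((Q ∪ T).filter (G.Adj v)) :=
        card_le_card (filter_subset_filter _ (hpart ▸ subset_univ S))
    _ ≤ _ := filter_union (G.Adj v) Q T ▸ card_union_le _ _

theorem mul_card_inter_add_sum_card_filter_adj_le {A S : Finset V} {m k : ℕ}
    (hin : ∀ v ∈ A, v ∈ S → #(S.filter (G.Adj v)) + m ≤ k)
    (hle : ∀ v ∈ A, #(S.filter (G.Adj v)) ≤ k) :
    m * #(S ∩ A) + ∑ v ∈ A, #(S.filter (G.Adj v)) ≤ k * #A := by
  have hloc : ∀ v ∈ A, (if v ∈ S then m else 0) + #(S.filter (G.Adj v)) ≤ k := by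
    intro v hv
    split_ifs with hvS
    · exact (add_comm m _).le.trans (hin v hv hvS)
    · exact (zero_add _).le.trans (hle v hv)
  have hind : ∑ v ∈ A, (if v ∈ S then m else 0) = m * #(S ∩ A) := by
    rw [sum_ite_mem, sum_const, smul_eq_mul, inter_comm, mul_comm]
  calc m * #(S ∩ A) + ∑ v ∈ A, #(S.filter (G.Adj v))
      = ∑ v ∈ A, ((if v ∈ S then m else 0) + #(S.filter (G.Adj v))) := by
        rw [sum_add_distrib, hind]
    _ ≤ ∑ _v ∈ A, k := sum_le_sum hloc
    _ = k * #A := by rw [sum_const, smul_eq_mul, mul_comm]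

theorem sum_card_filter_adj_eq [Fintype V] {Q T A : Finset V} {dQ dT : ℕ}
    (hpart : Q ∪ T = univ) (hdisj : Disjoint Q T)
    (hdQ : ∀ v ∈ Q, #(A.filter (G.Adj v)) = dQ) (hdT : ∀ v ∈ T, #(A.filter (G.Adj v)) = dT)
    (S : Finset V) :
    ∑ u ∈ S, #(A.filter (G.Adj u)) = dQ * #(S ∩ Q) + dT * #(S ∩ T) := by
  conv_lhs => rw [← inter_union_inter_eq_self_of_union_eq_univ hpart S]
  rw [sum_union (hdisj.mono inter_subset_right inter_subset_right),
    sum_const_nat fun u hu => hdQ u (mem_inter.mp hu).2,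
    sum_const_nat fun u hu => hdT u (mem_inter.mp hu).2, mul_comm, mul_comm _ dT]

end SimpleGraph

end

open scoped Classical

theorem stmt_8 {V : Type*} [Fintype V] (G : SimpleGraph V) (Q T : Finset V)
    (hpart : Q ∪ T = Finset.univ) (hdisj : Disjoint Q T)
    (hcard : T.card = 2 * Q.card)
    (hQ : ∀ v ∈ Q, (Q.filter (fun w => G.Adj v w)).card = 2 ∧
                   (T.filter (fun w => G.Adj v w)).card = 2)
    (hT : ∀ v ∈ T, (Q.filter (fun w => G.Adj v w)).card = 1 ∧
                   (T.filter (fun w => G.Adj v w)).card = 2)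
    (S : Finset V)
    (hSQ : ∀ v ∈ S, v ∈ Q → (S.filter (fun w => G.Adj v w)).card ≤ 2)
    (hST : ∀ v ∈ S, v ∈ T → (S.filter (fun w => G.Adj v w)).card ≤ 1) :
    (S.card : ℝ) ≤ 13 / 21 * ((Q.card : ℝ) + T.card) := by
  have hdeg v := G.card_filter_adj_le_add hpart S v
  have hsumQ := G.sum_card_filter_adj_eq hpart hdisj (fun v hv => (hQ v hv).1)
    (fun v hv => (hT v hv).1) S
  have hsumT := G.sum_card_filter_adj_eq hpart hdisj (fun v hv => (hQ v hv).2)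
    (fun v hv => (hT v hv).2) S
  have hboundQ := G.mul_card_inter_add_sum_card_filter_adj_le (m := 2) (k := 4)
    (fun v hv hvS => by linarith [hSQ v hvS hv])
    (fun v hv => by linarith [hdeg v, hQ v hv])
  have hboundT := G.mul_card_inter_add_sum_card_filter_adj_le (m := 2) (k := 3)
    (fun v hv hvS => by linarith [hST v hvS hv])
    (fun v hv => by linarith [hdeg v, hT v hv])
  rw [G.sum_card_filter_adj_comm, hsumQ] at hboundQ
  rw [G.sum_card_filter_adj_comm, hsumT] at hboundT
  rw [Finset.card_eq_card_inter_add_card_inter hpart hdisj S]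
  rify at hboundQ hboundT hcard
  push_cast
  linarith
end

section
/- Let G be a finite graph whose vertex set is partitioned into hexagon vertices H of degree 6 and triangle vertices T of degree 3, with |T| = 2|H|, such that every hexagon vertex has 6 triangle neighbors and every triangle vertex has 3 hexagon neighbors. If S is a set of vertices such that every hexagon vertex in S has at most 3 neighbors in S and every triangle vertex in S has at most 1 neighbor in S, then |S| ≤ (2/3)(|H| + |T|). -/
/-!
Every hexagon vertex of `S` has at most `3` of its `6` triangle neighbours in `S`, so at least `3`
outside `S`; every triangle vertex has only `3` hexagon neighbours. Double counting the edges between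
`S ∩ H` and `T \ S` gives `#(S ∩ H) ≤ #(T \ S)`, hence `#S ≤ #(S ∩ H) + #(S ∩ T) ≤ #T = 2 #H`,
which is `2/3 (#H + #T)`.
-/

open scoped Classical

open Finset

theorem Finset.card_filter_le_card_filter_sdiff_add {α : Type*} [DecidableEq α] (s t : Finset α)
    (p : α → Prop) [DecidablePred p] :
    #(s.filter p) ≤ #((s \ t).filter p) + #(t.filter p) := by
  calc #(s.filter p) ≤ #((s \ t).filter p ∪ t.filter p) := by
        refine card_le_card fun x hx => ?_
        simp only [mem_filter, mem_union, mem_sdiff] at hx ⊢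
        tauto
    _ ≤ #((s \ t).filter p) + #(t.filter p) := card_union_le _ _

theorem SimpleGraph.card_inter_mul_le_card_sdiff_mul {V : Type*} [DecidableEq V]
    (G : SimpleGraph V) [DecidableRel G.Adj] (H T S : Finset V) {d k e : ℕ}
    (hH : ∀ v ∈ H, d ≤ #(T.filter (G.Adj v)))
    (hT : ∀ w ∈ T, #(H.filter (G.Adj w)) ≤ e)
    (hS : ∀ v ∈ S ∩ H, #(S.filter (G.Adj v)) ≤ k) :
    #(S ∩ H) * (d - k) ≤ #(T \ S) * e := by
  refine card_mul_le_card_mul G.Adj (fun v hv => ?_) (fun w hw => ?_)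
  · have hsplit := card_filter_le_card_filter_sdiff_add T S (G.Adj v)
    have hd := hH v (mem_inter.1 hv).2
    have hk := hS v hv
    change d - k ≤ #((T \ S).filter (G.Adj v))
    omega
  · calc #((S ∩ H).bipartiteBelow G.Adj w) ≤ #(H.filter (G.Adj w)) := by
          refine card_le_card fun x hx => ?_
          simp only [bipartiteBelow, mem_filter, mem_inter] at hx ⊢
          exact ⟨hx.1.2, hx.2.symm⟩
      _ ≤ e := hT w (mem_sdiff.1 hw).1

theorem stmt_9_general {V : Type*} [Fintype V] (G : SimpleGraph V) (H T : Finset V)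
    (hpart : H ∪ T = Finset.univ)
    (hcard : T.card = 2 * H.card)
    (hH : ∀ v ∈ H, (T.filter (fun w => G.Adj v w)).card = 6 ∧
                   (H.filter (fun w => G.Adj v w)).card = 0)
    (hT : ∀ v ∈ T, (H.filter (fun w => G.Adj v w)).card = 3 ∧
                   (T.filter (fun w => G.Adj v w)).card = 0)
    (S : Finset V)
    (hSH : ∀ v ∈ S, v ∈ H → (S.filter (fun w => G.Adj v w)).card ≤ 3) :
    (S.card : ℝ) ≤ 2 / 3 * ((H.card : ℝ) + T.card) := by
  have hSsplit : #S ≤ #(S ∩ H) + #(S ∩ T) := by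
    calc #S = #(S ∩ H ∪ S ∩ T) := by rw [← inter_union_distrib_left, hpart, inter_univ]
      _ ≤ #(S ∩ H) + #(S ∩ T) := card_union_le _ _
  have hhex : #(S ∩ H) * (6 - 3) ≤ #(T \ S) * 3 :=
    G.card_inter_mul_le_card_sdiff_mul H T S (fun v hv => (hH v hv).1.ge)
      (fun w hw => (hT w hw).1.le) (fun v hv => hSH v (mem_inter.1 hv).1 (mem_inter.1 hv).2)
  have hT_split : #(T ∩ S) + #(T \ S) = #T := card_inter_add_card_sdiff T S
  have hS_le : #S ≤ 2 * #H := by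
    rw [inter_comm S T] at hSsplit
    omega
  have hS_le_real : (#S : ℝ) ≤ 2 * #H := by exact_mod_cast hS_le
  rw [hcard]
  push_cast
  linarith

theorem stmt_9 {V : Type*} [Fintype V] (G : SimpleGraph V) (H T : Finset V)
    (hpart : H ∪ T = Finset.univ) (hdisj : Disjoint H T)
    (hcard : T.card = 2 * H.card)
    (hH : ∀ v ∈ H, (T.filter (fun w => G.Adj v w)).card = 6 ∧
                   (H.filter (fun w => G.Adj v w)).card = 0)
    (hT : ∀ v ∈ T, (H.filter (fun w => G.Adj v w)).card = 3 ∧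
                   (T.filter (fun w => G.Adj v w)).card = 0)
    (S : Finset V)
    (hSH : ∀ v ∈ S, v ∈ H → (S.filter (fun w => G.Adj v w)).card ≤ 3)
    (hST : ∀ v ∈ S, v ∈ T → (S.filter (fun w => G.Adj v w)).card ≤ 1) :
    (S.card : ℝ) ≤ 2 / 3 * ((H.card : ℝ) + T.card) :=
  stmt_9_general G H T hpart hcard hH hT S hSH
end
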